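/- arXiv:2605.05877 — 3 statements merged into one kernel-verified Lean document; each statement's English description precedes it below -/
import Mathlib

section
/- Let q ≥ 2 and n ≥ q be integers and β ≥ q/2 a real number. For each integer m with 0 ≤ m ≤ ⌊n/q⌋ define p_m = (n! / ((m!)^{q−1}·(n − (q−1)m)!)) · exp((β/n)·((q−1)·m² + (n − (q−1)m)²)). Then the sequence (p_m)_{0 ≤ m ≤ ⌊n/q⌋} is unimodal: there exists m* with 0 ≤ m* ≤ ⌊n/q⌋ such that p_{m−1} ≤ p_m for all 1 ≤ m ≤ m*, and p_{m−1} ≥ p_m for all m* < m ≤ ⌊n/q⌋. -/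
open Finset Set

-- convexity of inverse, explicit form
lemma inv_comb {a b u v : ℝ} (ha : 0 < a) (hb : 0 < b) (hu : 0 ≤ u) (hv : 0 ≤ v)
    (huv : u + v = 1) : (u*a + v*b)⁻¹ ≤ u*a⁻¹ + v*b⁻¹ := by
  have hd : 0 < u*a + v*b := by
    rcases hu.eq_or_lt with h | h
    · have hv1 : v = 1 := by linarith
      simp [← h, hv1, hb]
    · nlinarith [mul_nonneg hv hb.le]
  have hrw : u*a⁻¹ + v*b⁻¹ = (u*b + v*a)/(a*b) := by field_simp
  have hv1 : v = 1 - u := by linarith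
  subst hv1
  rw [hrw, inv_eq_one_div, div_le_div_iff₀ hd (by positivity)]
  nlinarith [mul_nonneg (mul_nonneg hu (by linarith : (0:ℝ) ≤ 1-u)) (sq_nonneg (a-b))]

lemma sum_range_cast_add_one (k : ℕ) :
    ∑ j ∈ Finset.range k, ((j:ℝ)+1) = k*(k+1)/2 := by
  induction k with
  | zero => simp
  | succ k ih => rw [Finset.sum_range_succ, ih]; push_cast; ring

lemma fact_add_prod (a k : ℕ) :
    (((a+k).factorial : ℕ) : ℝ) =
      (a.factorial : ℝ) * ∏ j ∈ Finset.range k, ((a:ℝ)+(j:ℝ)+1) := by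
  induction k with
  | zero => simp
  | succ k ih =>
      rw [Finset.prod_range_succ, ← mul_assoc, ← ih]
      have : a + (k+1) = (a+k) + 1 := by ring
      rw [this, Nat.factorial_succ]
      push_cast; ring

noncomputable def pF (q n : ℕ) (β : ℝ) (x : ℝ) : ℝ :=
  (∑ j ∈ Finset.range (q-1), Real.log ((n:ℝ) - ((q:ℝ)-1)*x + ((j:ℝ)+1)))
  - ((q:ℝ)-1) * Real.log x
  + β/(n:ℝ) * ((q:ℝ)-1) * (2*(q:ℝ)*x - 2*(n:ℝ) - (q:ℝ))

noncomputable def pF' (q n : ℕ) (β : ℝ) (x : ℝ) : ℝ :=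
  (∑ j ∈ Finset.range (q-1), -((q:ℝ)-1) / ((n:ℝ) - ((q:ℝ)-1)*x + ((j:ℝ)+1)))
  - ((q:ℝ)-1) * x⁻¹
  + β/(n:ℝ) * ((q:ℝ)-1) * (2*(q:ℝ))

lemma arg_pos (q n : ℕ) {x : ℝ} (hx : 0 < x) (hxn : (q:ℝ)*x ≤ (n:ℝ)) (j : ℕ) :
    0 < (n:ℝ) - ((q:ℝ)-1)*x + ((j:ℝ)+1) := by
  nlinarith [(Nat.cast_nonneg j : (0:ℝ) ≤ (j:ℝ))]

lemma pF_hasDeriv (q n : ℕ) (β : ℝ) {x : ℝ} (hx : 0 < x) (hxn : (q:ℝ)*x ≤ (n:ℝ)) :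
    HasDerivAt (pF q n β) (pF' q n β x) x := by
  have hsum : HasDerivAt
      (fun y : ℝ => ∑ j ∈ Finset.range (q-1),
        Real.log ((n:ℝ) - ((q:ℝ)-1)*y + ((j:ℝ)+1)))
      (∑ j ∈ Finset.range (q-1),
        -((q:ℝ)-1) / ((n:ℝ) - ((q:ℝ)-1)*x + ((j:ℝ)+1))) x := by
    apply HasDerivAt.fun_sum
    intro j _
    have h0 : HasDerivAt (fun y : ℝ => (n:ℝ) - ((q:ℝ)-1)*y + ((j:ℝ)+1))
        (-((q:ℝ)-1)) x := by
      simpa using (((hasDerivAt_id x).const_mul ((q:ℝ)-1)).const_sub ((n:ℝ))).add_const ((j:ℝ)+1)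
    exact h0.log (arg_pos q n hx hxn j).ne'
  have hlog : HasDerivAt (fun y : ℝ => ((q:ℝ)-1) * Real.log y) (((q:ℝ)-1) * x⁻¹) x :=
    (Real.hasDerivAt_log hx.ne').const_mul _
  have hlin : HasDerivAt
      (fun y : ℝ => β/(n:ℝ) * ((q:ℝ)-1) * (2*(q:ℝ)*y - 2*(n:ℝ) - (q:ℝ)))
      (β/(n:ℝ) * ((q:ℝ)-1) * (2*(q:ℝ))) x := by
    have h1 : HasDerivAt (fun y : ℝ => 2*(q:ℝ)*y - 2*(n:ℝ) - (q:ℝ)) (2*(q:ℝ)) x := by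
      simpa using (((hasDerivAt_id x).const_mul (2*(q:ℝ))).sub_const (2*(n:ℝ))).sub_const ((q:ℝ))
    simpa using h1.const_mul (β/(n:ℝ) * ((q:ℝ)-1))
  exact (hsum.sub hlog).add hlin

lemma pF_endpoint_le (q n : ℕ) (β : ℝ) (hq : 2 ≤ q) (hn : q ≤ n) (hβ : (q:ℝ)/2 ≤ β) :
    pF q n β ((n:ℝ)/(q:ℝ)) ≤ 0 := by
  have hq2 : (2:ℝ) ≤ (q:ℝ) := by exact_mod_cast hq
  have hqn : (q:ℝ) ≤ (n:ℝ) := by exact_mod_cast hn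
  have hq0 : (0:ℝ) < (q:ℝ) := by linarith
  have hn0 : (0:ℝ) < (n:ℝ) := by linarith
  set x0 : ℝ := (n:ℝ)/(q:ℝ) with hx0
  have hx0pos : 0 < x0 := by positivity
  have hkq : ((q-1 : ℕ):ℝ) = (q:ℝ)-1 := by
    have : 1 ≤ q := by omega
    push_cast [Nat.cast_sub this]; ring
  have hcard : ((q:ℝ)-1) * Real.log x0 = ∑ _j ∈ Finset.range (q-1), Real.log x0 := by
    rw [Finset.sum_const, Finset.card_range, nsmul_eq_mul, hkq]
  have harg : ∀ j : ℕ, (n:ℝ) - ((q:ℝ)-1)*x0 + ((j:ℝ)+1) = x0 + ((j:ℝ)+1) := by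
    intro j; rw [hx0]; field_simp; ring
  have hterm : ∀ j ∈ Finset.range (q-1),
      Real.log ((n:ℝ) - ((q:ℝ)-1)*x0 + ((j:ℝ)+1)) - Real.log x0 ≤ ((j:ℝ)+1)/x0 := by
    intro j _
    rw [harg j, ← Real.log_div (by positivity) hx0pos.ne']
    have hpos : 0 < (x0 + ((j:ℝ)+1))/x0 := by positivity
    have := Real.log_le_sub_one_of_pos hpos
    have heq : (x0 + ((j:ℝ)+1))/x0 - 1 = ((j:ℝ)+1)/x0 := by field_simp; ring
    linarith [heq ▸ this]
  have hsum : ∑ j ∈ Finset.range (q-1), Real.log ((n:ℝ) - ((q:ℝ)-1)*x0 + ((j:ℝ)+1))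
      - ((q:ℝ)-1) * Real.log x0 ≤ ((q:ℝ)-1)*(q:ℝ)/2 / x0 := by
    rw [hcard, ← Finset.sum_sub_distrib]
    calc ∑ j ∈ Finset.range (q-1),
        (Real.log ((n:ℝ) - ((q:ℝ)-1)*x0 + ((j:ℝ)+1)) - Real.log x0)
        ≤ ∑ j ∈ Finset.range (q-1), ((j:ℝ)+1)/x0 := Finset.sum_le_sum hterm
      _ = (∑ j ∈ Finset.range (q-1), ((j:ℝ)+1))/x0 := by rw [Finset.sum_div]
      _ = ((q:ℝ)-1)*(q:ℝ)/2 / x0 := by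
          rw [sum_range_cast_add_one (q-1), hkq]
          congr 1
          ring
  have hlin : β/(n:ℝ) * ((q:ℝ)-1) * (2*(q:ℝ)*x0 - 2*(n:ℝ) - (q:ℝ))
      = -(β*((q:ℝ)-1)*(q:ℝ)/(n:ℝ)) := by
    rw [hx0]; field_simp; ring
  have hdiv : ((q:ℝ)-1)*(q:ℝ)/2 / x0 = (q:ℝ)*(q:ℝ)*((q:ℝ)-1)/(2*(n:ℝ)) := by
    rw [hx0]; field_simp
  have hfin : (q:ℝ)*(q:ℝ)*((q:ℝ)-1)/(2*(n:ℝ)) ≤ β*((q:ℝ)-1)*(q:ℝ)/(n:ℝ) := by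
    rw [div_le_div_iff₀ (by linarith) hn0]
    nlinarith [mul_nonneg (mul_nonneg (mul_nonneg
      (by linarith : (0:ℝ) ≤ 2*β - (q:ℝ)) (by linarith : (0:ℝ) ≤ (q:ℝ)-1)) hq0.le) hn0.le]
  unfold pF
  rw [hlin]
  rw [hdiv] at hsum
  linarith

lemma pF'_endpoint_nonneg (q n : ℕ) (β : ℝ) (hq : 2 ≤ q) (hn : q ≤ n) (hβ : (q:ℝ)/2 ≤ β) :
    0 ≤ pF' q n β ((n:ℝ)/(q:ℝ)) := by
  have hq2 : (2:ℝ) ≤ (q:ℝ) := by exact_mod_cast hq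
  have hqn : (q:ℝ) ≤ (n:ℝ) := by exact_mod_cast hn
  have hq0 : (0:ℝ) < (q:ℝ) := by linarith
  have hn0 : (0:ℝ) < (n:ℝ) := by linarith
  set x0 : ℝ := (n:ℝ)/(q:ℝ) with hx0
  have hx0pos : 0 < x0 := by positivity
  have hkq : ((q-1 : ℕ):ℝ) = (q:ℝ)-1 := by
    have : 1 ≤ q := by omega
    push_cast [Nat.cast_sub this]; ring
  have harg : ∀ j : ℕ, (n:ℝ) - ((q:ℝ)-1)*x0 + ((j:ℝ)+1) = x0 + ((j:ℝ)+1) := by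
    intro j; rw [hx0]; field_simp; ring
  have hterm : ∀ j ∈ Finset.range (q-1),
      -(((q:ℝ)-1) * x0⁻¹) ≤ -((q:ℝ)-1) / ((n:ℝ) - ((q:ℝ)-1)*x0 + ((j:ℝ)+1)) := by
    intro j _
    rw [harg j, neg_div]
    have hj0 : (0:ℝ) ≤ (j:ℝ) := Nat.cast_nonneg j
    have h1 : ((q:ℝ)-1) / (x0 + ((j:ℝ)+1)) ≤ ((q:ℝ)-1) / x0 := by
      apply div_le_div_of_nonneg_left (by linarith) hx0pos (by linarith)
    simp only [div_eq_mul_inv] at h1 ⊢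
    linarith
  have hsum : -(((q:ℝ)-1) * (((q:ℝ)-1) * x0⁻¹)) ≤
      ∑ j ∈ Finset.range (q-1), -((q:ℝ)-1) / ((n:ℝ) - ((q:ℝ)-1)*x0 + ((j:ℝ)+1)) := by
    calc -(((q:ℝ)-1) * (((q:ℝ)-1) * x0⁻¹))
        = ∑ _j ∈ Finset.range (q-1), -(((q:ℝ)-1) * x0⁻¹) := by
          rw [Finset.sum_const, Finset.card_range, nsmul_eq_mul, hkq]; ring
      _ ≤ _ := Finset.sum_le_sum hterm
  have hinv : x0⁻¹ = (q:ℝ)/(n:ℝ) := by rw [hx0]; field_simp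
  unfold pF'
  rw [hinv] at hsum ⊢
  have h2 : 0 ≤ -(((q:ℝ)-1) * (((q:ℝ)-1) * ((q:ℝ)/(n:ℝ)))) - ((q:ℝ)-1)*((q:ℝ)/(n:ℝ))
      + β/(n:ℝ) * ((q:ℝ)-1) * (2*(q:ℝ)) := by
    have key : 0 ≤ (2*β - (q:ℝ)) * ((q:ℝ)-1) * (q:ℝ) / (n:ℝ) :=
      div_nonneg (mul_nonneg (mul_nonneg (by linarith) (by linarith)) hq0.le) hn0.le
    have expand : (2*β - (q:ℝ)) * ((q:ℝ)-1) * (q:ℝ) / (n:ℝ)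
        = -(((q:ℝ)-1) * (((q:ℝ)-1) * ((q:ℝ)/(n:ℝ)))) - ((q:ℝ)-1)*((q:ℝ)/(n:ℝ))
          + β/(n:ℝ) * ((q:ℝ)-1) * (2*(q:ℝ)) := by
      field_simp; ring
    linarith [expand ▸ key]
  linarith

lemma pF'_nonneg_between (q n : ℕ) (β : ℝ) (hq : 2 ≤ q) (hn : q ≤ n)
    {ξ t : ℝ} (hξ : 0 < ξ) (hξt : ξ ≤ t) (ht : t ≤ (n:ℝ)/(q:ℝ))
    (h0 : 0 ≤ pF' q n β ξ) (h1 : 0 ≤ pF' q n β ((n:ℝ)/(q:ℝ))) :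
    0 ≤ pF' q n β t := by
  have hq2 : (2:ℝ) ≤ (q:ℝ) := by exact_mod_cast hq
  have hqn : (q:ℝ) ≤ (n:ℝ) := by exact_mod_cast hn
  have hq0 : (0:ℝ) < (q:ℝ) := by linarith
  have hn0 : (0:ℝ) < (n:ℝ) := by linarith
  obtain ⟨x0, hx0⟩ : ∃ x0 : ℝ, x0 = (n:ℝ)/(q:ℝ) := ⟨_, rfl⟩
  rw [← hx0] at ht h1
  have hx0pos : 0 < x0 := by rw [hx0]; positivity
  have hqx0 : (q:ℝ)*x0 = (n:ℝ) := by rw [hx0]; field_simp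
  rcases eq_or_lt_of_le (le_trans hξt ht) with heq | hlt
  · have htx : t = x0 := le_antisymm ht (heq ▸ hξt)
    rw [htx]; exact h1
  obtain ⟨u, v, hu, hv, huv, htc⟩ :
      ∃ u v : ℝ, 0 ≤ u ∧ 0 ≤ v ∧ u + v = 1 ∧ t = u*ξ + v*x0 := by
    have hden : 0 < x0 - ξ := by linarith
    refine ⟨(x0 - t)/(x0 - ξ), (t - ξ)/(x0 - ξ),
      div_nonneg (by linarith) hden.le, div_nonneg (by linarith) hden.le, ?_, ?_⟩
    · field_simp; ring
    · field_simp; ring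
  have ht0 : 0 < t := lt_of_lt_of_le hξ hξt
  have hqξ : (q:ℝ)*ξ ≤ (n:ℝ) := by nlinarith [le_trans hξt ht]
  have hqt : (q:ℝ)*t ≤ (n:ℝ) := by nlinarith
  have hqx0' : (q:ℝ)*x0 ≤ (n:ℝ) := le_of_eq hqx0
  have hQ1 : (0:ℝ) ≤ (q:ℝ)-1 := by linarith
  -- key inequality on each summand
  have hterm : ∀ j ∈ Finset.range (q-1),
      u * (-((q:ℝ)-1) / ((n:ℝ) - ((q:ℝ)-1)*ξ + ((j:ℝ)+1)))
      + v * (-((q:ℝ)-1) / ((n:ℝ) - ((q:ℝ)-1)*x0 + ((j:ℝ)+1)))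
      ≤ -((q:ℝ)-1) / ((n:ℝ) - ((q:ℝ)-1)*t + ((j:ℝ)+1)) := by
    intro j _
    have hAξ : 0 < (n:ℝ) - ((q:ℝ)-1)*ξ + ((j:ℝ)+1) := arg_pos q n hξ hqξ j
    have hAx0 : 0 < (n:ℝ) - ((q:ℝ)-1)*x0 + ((j:ℝ)+1) := arg_pos q n hx0pos hqx0' j
    have hAt : (n:ℝ) - ((q:ℝ)-1)*t + ((j:ℝ)+1)
        = u*((n:ℝ) - ((q:ℝ)-1)*ξ + ((j:ℝ)+1)) + v*((n:ℝ) - ((q:ℝ)-1)*x0 + ((j:ℝ)+1)) := by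
      rw [htc]; linear_combination (-((n:ℝ) + (j:ℝ) + 1)) * huv
    have hinv := inv_comb hAξ hAx0 hu hv huv
    rw [← hAt] at hinv
    have h3 := mul_le_mul_of_nonneg_left hinv hQ1
    simp only [div_eq_mul_inv, neg_mul]
    nlinarith [h3]
  have hS : u * (∑ j ∈ Finset.range (q-1), -((q:ℝ)-1) / ((n:ℝ) - ((q:ℝ)-1)*ξ + ((j:ℝ)+1)))
      + v * (∑ j ∈ Finset.range (q-1), -((q:ℝ)-1) / ((n:ℝ) - ((q:ℝ)-1)*x0 + ((j:ℝ)+1)))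
      ≤ ∑ j ∈ Finset.range (q-1), -((q:ℝ)-1) / ((n:ℝ) - ((q:ℝ)-1)*t + ((j:ℝ)+1)) := by
    rw [Finset.mul_sum, Finset.mul_sum, ← Finset.sum_add_distrib]
    exact Finset.sum_le_sum hterm
  have hIt : t⁻¹ ≤ u * ξ⁻¹ + v * x0⁻¹ := by
    have h4 := inv_comb hξ hx0pos hu hv huv
    rw [← htc] at h4
    exact h4
  have h2 := mul_le_mul_of_nonneg_left hIt hQ1
  have hkey : u * pF' q n β ξ + v * pF' q n β x0 ≤ pF' q n β t := by
    have e : ∀ y : ℝ, pF' q n β y =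
        (∑ j ∈ Finset.range (q-1), -((q:ℝ)-1) / ((n:ℝ) - ((q:ℝ)-1)*y + ((j:ℝ)+1)))
        - ((q:ℝ)-1) * y⁻¹ + β/(n:ℝ) * ((q:ℝ)-1) * (2*(q:ℝ)) := fun _ => rfl
    rw [e ξ, e x0, e t]
    set c : ℝ := β/(n:ℝ) * ((q:ℝ)-1) * (2*(q:ℝ)) with hc
    set Sξ : ℝ := ∑ j ∈ Finset.range (q-1),
      -((q:ℝ)-1) / ((n:ℝ) - ((q:ℝ)-1)*ξ + ((j:ℝ)+1)) with hSξ
    set Sx0 : ℝ := ∑ j ∈ Finset.range (q-1),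
      -((q:ℝ)-1) / ((n:ℝ) - ((q:ℝ)-1)*x0 + ((j:ℝ)+1)) with hSx0
    set St : ℝ := ∑ j ∈ Finset.range (q-1),
      -((q:ℝ)-1) / ((n:ℝ) - ((q:ℝ)-1)*t + ((j:ℝ)+1)) with hSt
    clear_value c Sξ Sx0 St
    have expand : u * (Sξ - ((q:ℝ)-1)*ξ⁻¹ + c) + v * (Sx0 - ((q:ℝ)-1)*x0⁻¹ + c)
        = (u*Sξ + v*Sx0) - (((q:ℝ)-1) * (u*ξ⁻¹ + v*x0⁻¹)) + c := by
      linear_combination c * huv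
    rw [expand]
    have h5 : ((q:ℝ)-1) * t⁻¹ ≤ ((q:ℝ)-1) * (u*ξ⁻¹ + v*x0⁻¹) := h2
    linarith [hS]
  nlinarith [mul_nonneg hu h0, mul_nonneg hv h1, hkey]

lemma pF_cross (q n : ℕ) (β : ℝ) (hq : 2 ≤ q) (hn : q ≤ n) (hβ : (q:ℝ)/2 ≤ β)
    {m : ℕ} (hm : 1 ≤ m) (hm2 : ((m:ℝ)+1) ≤ (n:ℝ)/(q:ℝ)) (h : pF q n β (m:ℝ) ≤ 0) :
    pF q n β ((m:ℝ)+1) ≤ 0 := by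
  have hq2 : (2:ℝ) ≤ (q:ℝ) := by exact_mod_cast hq
  have hqn : (q:ℝ) ≤ (n:ℝ) := by exact_mod_cast hn
  have hq0 : (0:ℝ) < (q:ℝ) := by linarith
  have hn0 : (0:ℝ) < (n:ℝ) := by linarith
  have hm1 : (1:ℝ) ≤ (m:ℝ) := by exact_mod_cast hm
  have hle : ∀ x:ℝ, x ≤ (n:ℝ)/(q:ℝ) → (q:ℝ)*x ≤ (n:ℝ) := by
    intro x hx
    calc (q:ℝ)*x ≤ (q:ℝ)*((n:ℝ)/(q:ℝ)) := by nlinarith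
      _ = (n:ℝ) := by field_simp
  obtain ⟨ξ, hξmem, hξeq⟩ := exists_hasDerivAt_eq_slope (pF q n β) (pF' q n β)
    (show (m:ℝ) < (m:ℝ)+1 by linarith)
    (fun x hx => (pF_hasDeriv q n β (by simp at hx; linarith [hx.1])
      (hle x (le_trans hx.2 hm2))).continuousAt.continuousWithinAt)
    (fun x hx => pF_hasDeriv q n β (by linarith [hx.1])
      (hle x (le_trans hx.2.le hm2)))
  have hslope : pF' q n β ξ = pF q n β ((m:ℝ)+1) - pF q n β (m:ℝ) := by
    rw [hξeq]; simp
  rcases le_or_gt (pF' q n β ξ) 0 with hneg | hpos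
  · linarith
  · have hξ0 : 0 < ξ := by linarith [hξmem.1]
    have hmono : MonotoneOn (pF q n β) (Set.Icc ξ ((n:ℝ)/(q:ℝ))) := by
      apply monotoneOn_of_deriv_nonneg (convex_Icc _ _)
      · intro x hx
        exact (pF_hasDeriv q n β (lt_of_lt_of_le hξ0 hx.1)
          (hle x hx.2)).continuousAt.continuousWithinAt
      · intro x hx
        rw [interior_Icc] at hx
        exact (pF_hasDeriv q n β (lt_of_lt_of_le hξ0 hx.1.le)
          (hle x hx.2.le)).differentiableAt.differentiableWithinAt
      · intro x hx
        rw [interior_Icc] at hx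
        rw [(pF_hasDeriv q n β (lt_of_lt_of_le hξ0 hx.1.le) (hle x hx.2.le)).deriv]
        exact pF'_nonneg_between q n β hq hn hξ0 hx.1.le hx.2.le hpos.le
          (pF'_endpoint_nonneg q n β hq hn hβ)
    have hmem1 : ((m:ℝ)+1) ∈ Set.Icc ξ ((n:ℝ)/(q:ℝ)) := ⟨hξmem.2.le, hm2⟩
    have hmem2 : ((n:ℝ)/(q:ℝ)) ∈ Set.Icc ξ ((n:ℝ)/(q:ℝ)) :=
      ⟨le_trans hξmem.2.le hm2, le_refl _⟩
    have := hmono hmem1 hmem2 hm2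
    linarith [pF_endpoint_le q n β hq hn hβ]

lemma p_pos (q n : ℕ) (β : ℝ) (p : ℕ → ℝ)
    (hp : ∀ m : ℕ, p m =
      ((n.factorial : ℝ) /
        (((m.factorial : ℝ)) ^ (q - 1) * ((n - (q - 1) * m).factorial : ℝ))) *
      Real.exp ((β / n) *
        (((q : ℝ) - 1) * (m : ℝ) ^ 2 + ((n : ℝ) - ((q : ℝ) - 1) * (m : ℝ)) ^ 2)))
    (m : ℕ) : 0 < p m := by
  rw [hp m]
  have h1 : (0:ℝ) < (n.factorial : ℝ) := by exact_mod_cast n.factorial_pos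
  have h2 : (0:ℝ) < (m.factorial : ℝ) := by exact_mod_cast m.factorial_pos
  have h3 : (0:ℝ) < ((n - (q-1)*m).factorial : ℝ) := by exact_mod_cast (n - (q-1)*m).factorial_pos
  positivity

lemma ratio_eq (q n : ℕ) (β : ℝ) (hq : 2 ≤ q) (hn : q ≤ n) (p : ℕ → ℝ)
    (hp : ∀ m : ℕ, p m =
      ((n.factorial : ℝ) /
        (((m.factorial : ℝ)) ^ (q - 1) * ((n - (q - 1) * m).factorial : ℝ))) *
      Real.exp ((β / n) *
        (((q : ℝ) - 1) * (m : ℝ) ^ 2 + ((n : ℝ) - ((q : ℝ) - 1) * (m : ℝ)) ^ 2)))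
    {k : ℕ} (hM : k + 1 ≤ n / q) :
    p (k+1) = p k * Real.exp (pF q n β ((k:ℝ)+1)) := by
  have hq2 : (2:ℝ) ≤ (q:ℝ) := by exact_mod_cast hq
  have hqn : (q:ℝ) ≤ (n:ℝ) := by exact_mod_cast hn
  have hq0 : (0:ℝ) < (q:ℝ) := by linarith
  have hn0 : (0:ℝ) < (n:ℝ) := by linarith
  have hdivle : q * (k+1) ≤ n := by
    calc q*(k+1) = (k+1)*q := by ring
      _ ≤ (n/q)*q := Nat.mul_le_mul_right q hM
      _ ≤ n := Nat.div_mul_le_self n q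
  have h1 : (q-1)*(k+1) ≤ n := le_trans (Nat.mul_le_mul_right _ (by omega : q-1 ≤ q)) hdivle
  have h2 : n - (q-1)*k = (n - (q-1)*(k+1)) + (q-1) := by
    have e : (q-1)*(k+1) = (q-1)*k + (q-1) := by ring
    rw [e] at h1 ⊢
    omega
  set a := n - (q-1)*(k+1) with ha
  have hkq : ((q-1 : ℕ):ℝ) = (q:ℝ)-1 := by
    have : 1 ≤ q := by omega
    push_cast [Nat.cast_sub this]; ring
  have hcast_a : ((a:ℕ):ℝ) = (n:ℝ) - ((q:ℝ)-1)*((k:ℝ)+1) := by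
    rw [ha]
    push_cast [Nat.cast_sub h1, hkq]
    ring
  have hqk : (q:ℝ)*((k:ℝ)+1) ≤ (n:ℝ) := by exact_mod_cast hdivle
  have hk1 : (0:ℝ) < (k:ℝ)+1 := by positivity
  have hargpos : ∀ j : ℕ, 0 < (n:ℝ) - ((q:ℝ)-1)*((k:ℝ)+1) + ((j:ℝ)+1) :=
    fun j => arg_pos q n hk1 hqk j
  -- exponential of pF
  have hexp : Real.exp (pF q n β ((k:ℝ)+1)) =
      (∏ j ∈ Finset.range (q-1), ((n:ℝ) - ((q:ℝ)-1)*((k:ℝ)+1) + ((j:ℝ)+1)))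
      / (((k:ℝ)+1)^(q-1))
      * Real.exp (β/(n:ℝ) * ((q:ℝ)-1) * (2*(q:ℝ)*((k:ℝ)+1) - 2*(n:ℝ) - (q:ℝ))) := by
    unfold pF
    rw [Real.exp_add, Real.exp_sub, Real.exp_sum]
    congr 2
    · exact Finset.prod_congr rfl fun j _ => Real.exp_log (hargpos j)
    · rw [← hkq, Real.exp_nat_mul, Real.exp_log hk1]
  have hfact : (((n - (q-1)*k).factorial :ℕ) : ℝ)
      = ((a.factorial :ℕ):ℝ) * ∏ j ∈ Finset.range (q-1), ((a:ℝ)+(j:ℝ)+1) := by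
    rw [h2]; exact fact_add_prod a (q-1)
  have hprod_eq : (∏ j ∈ Finset.range (q-1), ((n:ℝ) - ((q:ℝ)-1)*((k:ℝ)+1) + ((j:ℝ)+1)))
      = ∏ j ∈ Finset.range (q-1), ((a:ℝ)+(j:ℝ)+1) :=
    Finset.prod_congr rfl fun j _ => by rw [hcast_a]; ring
  have hfs : (((k+1).factorial :ℕ):ℝ) = ((k:ℝ)+1) * ((k.factorial:ℕ):ℝ) := by
    rw [Nat.factorial_succ]; push_cast; ring
  have hquad : Real.exp ((β/(n:ℝ)) * (((q:ℝ)-1)*((k:ℝ))^2 + ((n:ℝ)-((q:ℝ)-1)*(k:ℝ))^2))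
      * Real.exp (β/(n:ℝ) * ((q:ℝ)-1) * (2*(q:ℝ)*((k:ℝ)+1) - 2*(n:ℝ) - (q:ℝ)))
      = Real.exp ((β/(n:ℝ)) * (((q:ℝ)-1)*((k:ℝ)+1)^2 + ((n:ℝ)-((q:ℝ)-1)*((k:ℝ)+1))^2)) := by
    rw [← Real.exp_add]
    congr 1
    field_simp
    ring
  -- positivity facts
  have hPpos : 0 < ∏ j ∈ Finset.range (q-1), ((a:ℝ)+(j:ℝ)+1) := by
    rw [← hprod_eq]; exact Finset.prod_pos fun j _ => hargpos j
  have hkf : (0:ℝ) < ((k.factorial:ℕ):ℝ) := by exact_mod_cast k.factorial_pos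
  have haf : (0:ℝ) < ((a.factorial:ℕ):ℝ) := by exact_mod_cast a.factorial_pos
  rw [hp (k+1), hp k, hexp, hprod_eq]
  push_cast [hfact, hfs]
  rw [mul_pow, ← ha, ← hquad]
  have hkp : (0:ℝ) < ((k:ℝ)+1)^(q-1) := by positivity
  field_simp [hkf.ne', haf.ne', hPpos.ne', hkp.ne']



/-- Unimodality of the diagonal sequence of the projected mean-field Potts model
for `β ≥ q/2`. -/
theorem potts_diagonal_unimodal (q n : ℕ) (hq : 2 ≤ q) (hn : q ≤ n)
    (β : ℝ) (hβ : (q : ℝ) / 2 ≤ β)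
    (p : ℕ → ℝ)
    (hp : ∀ m : ℕ, p m =
      ((n.factorial : ℝ) /
        (((m.factorial : ℝ)) ^ (q - 1) * ((n - (q - 1) * m).factorial : ℝ))) *
      Real.exp ((β / n) *
        (((q : ℝ) - 1) * (m : ℝ) ^ 2 + ((n : ℝ) - ((q : ℝ) - 1) * (m : ℝ)) ^ 2))) :
    ∃ mstar : ℕ, mstar ≤ n / q ∧
      (∀ m : ℕ, 1 ≤ m → m ≤ mstar → p (m - 1) ≤ p m) ∧
      (∀ m : ℕ, mstar < m → m ≤ n / q → p m ≤ p (m - 1)) := by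
  have hq2 : (2:ℝ) ≤ (q:ℝ) := by exact_mod_cast hq
  have hqn : (q:ℝ) ≤ (n:ℝ) := by exact_mod_cast hn
  have hq0 : (0:ℝ) < (q:ℝ) := by linarith
  have hMd : ((n/q : ℕ):ℝ) ≤ (n:ℝ)/(q:ℝ) := by
    rw [le_div_iff₀ hq0]
    exact_mod_cast Nat.div_mul_le_self n q
  have hup : ∀ m : ℕ, 1 ≤ m → m ≤ n/q → 0 ≤ pF q n β (m:ℝ) → p (m-1) ≤ p m := by
    intro m h1 h2 h3
    obtain ⟨k, rfl⟩ : ∃ k, m = k + 1 := ⟨m - 1, by omega⟩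
    have hr := ratio_eq q n β hq hn p hp h2
    have hpk := p_pos q n β p hp k
    have he : 1 ≤ Real.exp (pF q n β ((k:ℝ)+1)) := by
      rw [Real.one_le_exp_iff]
      convert h3 using 2
      push_cast; ring
    have : (k+1) - 1 = k := rfl
    rw [this, hr]
    nlinarith
  have hdn : ∀ m : ℕ, 1 ≤ m → m ≤ n/q → pF q n β (m:ℝ) ≤ 0 → p m ≤ p (m-1) := by
    intro m h1 h2 h3
    obtain ⟨k, rfl⟩ : ∃ k, m = k + 1 := ⟨m - 1, by omega⟩
    have hr := ratio_eq q n β hq hn p hp h2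
    have hpk := p_pos q n β p hp k
    have he : Real.exp (pF q n β ((k:ℝ)+1)) ≤ 1 := by
      rw [Real.exp_le_one_iff]
      convert h3 using 2
      push_cast; ring
    have : (k+1) - 1 = k := rfl
    rw [this, hr]
    nlinarith
  have hcross : ∀ m : ℕ, 1 ≤ m → m + 1 ≤ n/q → pF q n β (m:ℝ) ≤ 0 →
      pF q n β ((m:ℝ)+1) ≤ 0 := by
    intro m h1 h2 h3
    apply pF_cross q n β hq hn hβ h1 _ h3
    calc (m:ℝ)+1 ≤ ((n/q : ℕ):ℝ) := by exact_mod_cast h2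
      _ ≤ (n:ℝ)/(q:ℝ) := hMd
  by_cases hall : ∀ m : ℕ, 1 ≤ m → m ≤ n/q → 0 ≤ pF q n β (m:ℝ)
  · exact ⟨n/q, le_refl _, fun m h1 h2 => hup m h1 h2 (hall m h1 h2),
      fun m h1 h2 => absurd h1 (by omega)⟩
  · push_neg at hall
    obtain ⟨m1, hm11, hm12, hm13⟩ := hall
    have hex : ∃ m : ℕ, 1 ≤ m ∧ m ≤ n/q ∧ pF q n β (m:ℝ) < 0 := ⟨m1, hm11, hm12, hm13⟩
    classical
    set m0 := Nat.find hex with hm0def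
    obtain ⟨hs1, hs2, hs3⟩ := Nat.find_spec hex
    refine ⟨m0 - 1, by omega, ?_, ?_⟩
    · intro m h1 h2
      apply hup m h1 (by omega)
      by_contra hneg
      push_neg at hneg
      exact absurd (⟨h1, by omega, hneg⟩ : 1 ≤ m ∧ m ≤ n/q ∧ pF q n β (m:ℝ) < 0)
        (Nat.find_min hex (by omega))
    · intro m h1 h2
      have hm0m : m0 ≤ m := by omega
      have hneg : ∀ j : ℕ, m0 ≤ j → j ≤ n/q → pF q n β (j:ℝ) ≤ 0 := by
        intro j hj
        induction j, hj using Nat.le_induction with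
        | base => intro _; exact hs3.le
        | succ j hj ih =>
          intro hj2
          have := hcross j (by omega) hj2 (ih (by omega))
          convert this using 2
          push_cast; ring
      exact hdn m (by omega) h2 (hneg m hm0m h2)
end

section
/- Let (Ω, E) be a finite graph, let {γ_{x→y}}_{x,y∈Ω} be a collection of directed walks in (Ω, E) with γ_{x→y} starting at x and ending at y, and for each pair let F_{x→y} : Ω × Ω → ℝ be the unit flow along γ_{x→y} (the antisymmetric function that, on each ordered pair (u,v) with {u,v} ∈ E, equals the number of steps of γ_{x→y} traversing u→v minus the number traversing v→u, and vanishes off E). Let D : Ω → ℝ satisfy Σ_{x∈Ω} D(x) = 0. Then there exist J : Ω × Ω → ℝ and j : Ω × Ω → ℝ such that: J is antisymmetric and vanishes off E; D(x) + Σ_{y∈Ω} J(x,y) = 0 for every x ∈ Ω; J = Σ_{x,y∈Ω} j(x,y)·F_{x→y}; j(x,y) ≥ 0 for all x,y; j(x,y) > 0 implies D(x) < 0 and D(y) > 0; the support of j has at most 2·|Ω| elements; and j(x,y) ≤ min(|D(x)|, |D(y)|) for all x,y. -/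
/-!
Split `D` into its deficit `D⁻` and surplus `D⁺`, which have equal total mass, and couple them by
the northwest-corner rule; the resulting plan `j` is bounded entrywise by both marginals and has at
most `2 |Ω|` nonzero entries. Superposing the unit flows of the walks with weights `j` gives `J`:
each walk's flow has divergence `1_x - 1_y`, so the divergence of `J` at `x` is
`D⁻ x - D⁺ x = -D x`.
-/

open Finset SimpleGraph

namespace SimpleGraph.Walk

variable {V : Type*} [DecidableEq V] {G : SimpleGraph V}

def netFlow {x y : V} (w : G.Walk x y) (u v : V) : ℝ :=
  ((w.darts.filter (fun d => d.fst = u ∧ d.snd = v)).length : ℝ) -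
    ((w.darts.filter (fun d => d.fst = v ∧ d.snd = u)).length : ℝ)

theorem netFlow_cons {x y z : V} (h : G.Adj x y) (w : G.Walk y z) (u v : V) :
    (cons h w).netFlow u v =
      ((if x = u ∧ y = v then 1 else 0) - (if x = v ∧ y = u then 1 else 0)) + w.netFlow u v := by
  simp only [netFlow, darts_cons, ← List.countP_eq_length_filter, List.countP_cons,
    Nat.cast_add, Nat.cast_ite, Nat.cast_one, Nat.cast_zero, decide_eq_true_eq]
  ring

theorem netFlow_antisymm {x y : V} (w : G.Walk x y) (u v : V) :
    w.netFlow u v = -w.netFlow v u := by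
  simp only [netFlow, neg_sub]

theorem netFlow_eq_zero_of_not_adj {x y : V} (w : G.Walk x y) {u v : V} (huv : ¬G.Adj u v) :
    w.netFlow u v = 0 := by
  have hno : ∀ a b : V, ¬G.Adj a b → w.darts.filter (fun d => d.fst = a ∧ d.snd = b) = [] :=
    fun a b hab => List.filter_eq_nil_iff.mpr fun d _ => by
      simp only [decide_eq_true_eq, not_and]
      rintro rfl rfl
      exact hab d.adj
  rw [netFlow, hno u v huv, hno v u (huv ∘ G.adj_symm), sub_self]

theorem sum_netFlow [Fintype V] {x y : V} (w : G.Walk x y) (u : V) :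
    ∑ v, w.netFlow u v = (if x = u then 1 else 0) - (if y = u then 1 else 0) := by
  induction w with
  | nil => simp [netFlow]
  | @cons a b c h w ih =>
    simp only [netFlow_cons, sum_add_distrib, ih, sum_sub_distrib, ite_and, sum_ite_irrel,
      sum_ite_eq, mem_univ, if_true, sum_const_zero]
    split_ifs <;> ring

end SimpleGraph.Walk

namespace SimpleGraph

variable {V : Type*} [Fintype V] [DecidableEq V] {G : SimpleGraph V}

def superposedFlow (γ : ∀ x y : V, G.Walk x y) (j : V → V → ℝ) (u v : V) : ℝ :=
  ∑ x, ∑ y, j x y * (γ x y).netFlow u v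

variable (γ : ∀ x y : V, G.Walk x y) (j : V → V → ℝ)

theorem superposedFlow_antisymm (u v : V) :
    superposedFlow γ j u v = -superposedFlow γ j v u := by
  simp only [superposedFlow, Walk.netFlow_antisymm _ u v, mul_neg, sum_neg_distrib]

theorem superposedFlow_eq_zero_of_not_adj {u v : V} (huv : ¬G.Adj u v) :
    superposedFlow γ j u v = 0 := by
  simp only [superposedFlow, Walk.netFlow_eq_zero_of_not_adj _ huv, mul_zero, sum_const_zero]

theorem sum_superposedFlow (u : V) :
    ∑ v, superposedFlow γ j u v = ∑ y, j u y - ∑ x, j x u := by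
  calc ∑ v, superposedFlow γ j u v = ∑ x, ∑ y, j x y * ∑ v, (γ x y).netFlow u v := by
        simp only [superposedFlow, mul_sum]
        rw [sum_comm]
        exact sum_congr rfl fun x _ => sum_comm
    _ = ∑ y, j u y - ∑ x, j x u := by
        simp only [Walk.sum_netFlow, mul_sub, mul_ite, mul_one, mul_zero, sum_sub_distrib,
          sum_ite_eq', sum_ite_irrel, mem_univ, if_true, sum_const_zero]

end SimpleGraph

theorem Monotone.eq_of_lt_of_le_succ {α : Type*} [Preorder α] {f : ℕ → α} (hf : Monotone f)
    {k l : ℕ} {t : α} (hk : f k < t) (hk' : t ≤ f (k + 1)) (hl : f l < t)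
    (hl' : t ≤ f (l + 1)) : k = l := by
  rcases Nat.lt_trichotomy k l with h | h | h
  · exact absurd (hk'.trans (hf h)) hl.not_ge
  · exact h
  · exact absurd (hl'.trans (hf h)) hk.not_ge

def intervalOverlap (c d p q : ℝ) : ℝ := max 0 (min d q - max c p)

theorem intervalOverlap_comm (c d p q : ℝ) :
    intervalOverlap c d p q = intervalOverlap p q c d := by
  rw [intervalOverlap, intervalOverlap, min_comm, max_comm c]

theorem intervalOverlap_nonneg (c d p q : ℝ) : 0 ≤ intervalOverlap c d p q := le_max_left _ _

theorem intervalOverlap_pos_iff {c d p q : ℝ} :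
    0 < intervalOverlap c d p q ↔ max c p < min d q := by
  simp only [intervalOverlap, lt_max_iff, lt_self_iff_false, false_or, sub_pos]

theorem intervalOverlap_le_sub {c d : ℝ} (hcd : c ≤ d) (p q : ℝ) :
    intervalOverlap c d p q ≤ d - c :=
  max_le (sub_nonneg.2 hcd) (sub_le_sub (min_le_left _ _) (le_max_left _ _))

theorem intervalOverlap_eq_sub {c d p q : ℝ} (hcd : c ≤ d) (hpq : p ≤ q) :
    intervalOverlap c d p q = min d (max c q) - min d (max c p) := by
  simp only [intervalOverlap, min_def, max_def]
  split_ifs <;> linarith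

section NorthwestCorner

variable {ι : Type*} [Fintype ι] {n : ℕ} (e : ι ≃ Fin n)

def cumSum (a : ι → ℝ) (k : ℕ) : ℝ := ∑ i with (e i : ℕ) < k, a i

variable (a b : ι → ℝ)

theorem cumSum_zero : cumSum e a 0 = 0 := by simp [cumSum]

theorem cumSum_of_le {k : ℕ} (hk : n ≤ k) : cumSum e a k = ∑ i, a i := by
  rw [cumSum, filter_true_of_mem fun i _ => (e i).isLt.trans_le hk]

theorem cumSum_succ (i : ι) : cumSum e a ((e i : ℕ) + 1) = cumSum e a (e i) + a i := by
  classical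
  have : univ.filter (fun j => (e j : ℕ) < e i + 1) =
      insert i (univ.filter fun j => (e j : ℕ) < e i) := by
    ext j
    simp only [mem_filter, mem_univ, true_and, mem_insert, Nat.lt_succ_iff_lt_or_eq,
      Fin.val_inj, e.apply_eq_iff_eq]
    tauto
  rw [cumSum, cumSum, this, sum_insert (by simp), add_comm]

variable {a b}

theorem monotone_cumSum (ha : 0 ≤ a) : Monotone (cumSum e a) := fun _ _ hkl =>
  sum_le_sum_of_subset_of_nonneg
    (fun i hi => by simp only [mem_filter, mem_univ, true_and] at hi ⊢; omega) fun i _ _ => ha i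

theorem sum_telescope_of_equivFin (h : ℕ → ℝ) :
    ∑ i, (h ((e i : ℕ) + 1) - h (e i)) = h n - h 0 := by
  rw [e.sum_comp fun m : Fin n => h ((m : ℕ) + 1) - h m, Fin.sum_univ_eq_sum_range
    (fun m => h (m + 1) - h m), sum_range_sub]

variable (a b) in
/-- Lay the masses `a` and `b` out, in the order `e`, as two partitions of `[0, ∑ a]` into
consecutive intervals; cell `(i, j)` receives the length of the overlap of the `i`-th interval of
the first partition with the `j`-th interval of the second. -/
def northwestCorner (i j : ι) : ℝ :=
  intervalOverlap (cumSum e a (e i)) (cumSum e a ((e i : ℕ) + 1))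
    (cumSum e b (e j)) (cumSum e b ((e j : ℕ) + 1))

theorem northwestCorner_comm (i j : ι) :
    northwestCorner e a b i j = northwestCorner e b a j i :=
  intervalOverlap_comm _ _ _ _

theorem northwestCorner_nonneg (i j : ι) : 0 ≤ northwestCorner e a b i j :=
  intervalOverlap_nonneg _ _ _ _

theorem northwestCorner_le_left (ha : 0 ≤ a) (i j : ι) : northwestCorner e a b i j ≤ a i := by
  simpa [northwestCorner, cumSum_succ] using
    intervalOverlap_le_sub (monotone_cumSum e ha (e i).val.le_succ) _ _

theorem northwestCorner_le (ha : 0 ≤ a) (hb : 0 ≤ b) (i j : ι) :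
    northwestCorner e a b i j ≤ min (a i) (b j) :=
  le_min (northwestCorner_le_left e ha i j)
    (northwestCorner_comm e i j ▸ northwestCorner_le_left e hb j i)

theorem sum_northwestCorner_right (ha : 0 ≤ a) (hb : 0 ≤ b) (hab : ∑ i, a i = ∑ i, b i)
    (i : ι) : ∑ j, northwestCorner e a b i j = a i := by
  set c := cumSum e a (e i)
  set d := cumSum e a ((e i : ℕ) + 1)
  have hcd : c ≤ d := monotone_cumSum e ha (e i).val.le_succ
  have hc : 0 ≤ c := cumSum_zero e a ▸ monotone_cumSum e ha (Nat.zero_le _)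
  have hd : d ≤ cumSum e b n := by
    rw [cumSum_of_le e b le_rfl, ← hab, ← cumSum_of_le e a le_rfl]
    exact monotone_cumSum e ha (e i).isLt
  -- clamping to `[c, d]` turns each overlap into a difference, and the differences telescope
  calc ∑ j, northwestCorner e a b i j
      = ∑ j, (min d (max c (cumSum e b ((e j : ℕ) + 1))) - min d (max c (cumSum e b (e j)))) :=
        sum_congr rfl fun j _ =>
          intervalOverlap_eq_sub hcd (monotone_cumSum e hb (e j).val.le_succ)
    _ = min d (max c (cumSum e b n)) - min d (max c (cumSum e b 0)) :=
        sum_telescope_of_equivFin e fun k => min d (max c (cumSum e b k))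
    _ = a i := by
        rw [cumSum_zero, max_eq_left hc, min_eq_right hcd, max_eq_right (hcd.trans hd),
          min_eq_left hd]
        simp only [d, c, cumSum_succ, add_sub_cancel_left]

theorem sum_northwestCorner_left (ha : 0 ≤ a) (hb : 0 ≤ b) (hab : ∑ i, a i = ∑ i, b i)
    (j : ι) : ∑ i, northwestCorner e a b i j = b j := by
  simp_rw [northwestCorner_comm e _ j]
  exact sum_northwestCorner_right e hb ha hab.symm j

theorem eq_of_northwestCorner_pos (hb : 0 ≤ b) {i j j' : ι}
    (h : 0 < northwestCorner e a b i j) (h' : 0 < northwestCorner e a b i j')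
    (hj : cumSum e a ((e i : ℕ) + 1) ≤ cumSum e b ((e j : ℕ) + 1))
    (hj' : cumSum e a ((e i : ℕ) + 1) ≤ cumSum e b ((e j' : ℕ) + 1)) : j = j' := by
  rw [northwestCorner, intervalOverlap_pos_iff, max_lt_iff, lt_min_iff, lt_min_iff] at h h'
  exact e.injective (Fin.ext ((monotone_cumSum e hb).eq_of_lt_of_le_succ h.2.1 hj h'.2.1 hj'))

/-- A cell of positive mass is charged to whichever of its two intervals ends first; each interval
is charged at most once. -/
theorem card_support_northwestCorner_le (ha : 0 ≤ a) (hb : 0 ≤ b) :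
    (univ.filter fun p : ι × ι => northwestCorner e a b p.1 p.2 ≠ 0).card ≤
      2 * Fintype.card ι := by
  classical
  calc _ ≤ (univ : Finset (ι ⊕ ι)).card := card_le_card_of_injOn
        (fun p => if cumSum e a ((e p.1 : ℕ) + 1) ≤ cumSum e b ((e p.2 : ℕ) + 1)
          then Sum.inl p.1 else Sum.inr p.2) (fun _ _ => mem_coe.2 (mem_univ _)) ?_
    _ = 2 * Fintype.card ι := by simp [two_mul]
  rintro ⟨i, j⟩ hp ⟨i', j'⟩ hp' heq
  simp only [coe_filter, mem_univ, true_and, Set.mem_ofPred_eq] at hp hp'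
  replace hp := (northwestCorner_nonneg e i j).lt_of_ne' hp
  replace hp' := (northwestCorner_nonneg e i' j').lt_of_ne' hp'
  dsimp only at heq
  split_ifs at heq with h₁ h₂ h₂
  · obtain rfl := Sum.inl_injective heq
    rw [eq_of_northwestCorner_pos e hb hp hp' h₁ h₂]
  · obtain rfl := Sum.inr_injective heq
    rw [northwestCorner_comm] at hp hp'
    rw [eq_of_northwestCorner_pos e ha hp hp' (not_le.1 h₁).le (not_le.1 h₂).le]

end NorthwestCorner

theorem posPart_le_abs {α : Type*} [Lattice α] [AddGroup α] [AddLeftMono α] [AddRightMono α]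
    (a : α) : a⁺ ≤ |a| :=
  (le_add_of_nonneg_right (negPart_nonneg a)).trans_eq (posPart_add_negPart a)

theorem negPart_le_abs {α : Type*} [Lattice α] [AddGroup α] [AddLeftMono α] [AddRightMono α]
    (a : α) : a⁻ ≤ |a| :=
  (le_add_of_nonneg_left (posPart_nonneg a)).trans_eq (posPart_add_negPart a)

theorem flux_construction_via_path_decomposition_general {Ω : Type*} [Fintype Ω]
    [DecidableEq Ω] (G : SimpleGraph Ω)
    (γ : ∀ x y : Ω, G.Walk x y)
    (F : Ω → Ω → Ω → Ω → ℝ)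
    (hF : ∀ x y u v : Ω, F x y u v =
      (((γ x y).darts.filter (fun d => d.fst = u ∧ d.snd = v)).length : ℝ) -
      (((γ x y).darts.filter (fun d => d.fst = v ∧ d.snd = u)).length : ℝ))
    (D : Ω → ℝ) (hD : ∑ x, D x = 0) :
    ∃ (J : Ω → Ω → ℝ) (j : Ω → Ω → ℝ),
      (∀ u v, J u v = - J v u) ∧
      (∀ u v, ¬ G.Adj u v → J u v = 0) ∧
      (∀ x, D x + ∑ y, J x y = 0) ∧
      (∀ u v, J u v = ∑ x, ∑ y, j x y * F x y u v) ∧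
      (∀ x y, 0 ≤ j x y) ∧
      (∀ x y, 0 < j x y → D x < 0 ∧ 0 < D y) ∧
      ((Finset.univ.filter (fun p : Ω × Ω => j p.1 p.2 ≠ 0)).card ≤
        2 * Fintype.card Ω) ∧
      (∀ x y, j x y ≤ min |D x| |D y|) := by
  obtain rfl : F = fun x y => (γ x y).netFlow := by
    funext x y u v
    exact hF x y u v
  have ha : 0 ≤ D⁻ := negPart_nonneg D
  have hb : 0 ≤ D⁺ := posPart_nonneg D
  have hmass : ∑ x, D⁻ x = ∑ x, D⁺ x := by
    have h : ∑ x, (D⁺ x - D⁻ x) = 0 := by simpa using hD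
    rwa [sum_sub_distrib, sub_eq_zero, eq_comm] at h
  set e := Fintype.equivFin Ω
  have hle : ∀ x y, northwestCorner e D⁻ D⁺ x y ≤ min (D x)⁻ (D y)⁺ :=
    northwestCorner_le e ha hb
  refine ⟨superposedFlow γ (northwestCorner e D⁻ D⁺), northwestCorner e D⁻ D⁺,
    superposedFlow_antisymm γ _, fun u v => superposedFlow_eq_zero_of_not_adj γ _,
    fun x => ?_, fun _ _ => rfl, northwestCorner_nonneg e, fun x y hxy => ?_,
    card_support_northwestCorner_le e ha hb,
    fun x y => (hle x y).trans (min_le_min (negPart_le_abs _) (posPart_le_abs _))⟩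
  · rw [sum_superposedFlow, sum_northwestCorner_right e ha hb hmass,
      sum_northwestCorner_left e ha hb hmass, Pi.negPart_apply, Pi.posPart_apply]
    linarith [posPart_sub_negPart (D x)]
  · have h := hxy.trans_le (hle x y)
    rwa [lt_min_iff, negPart_pos_iff, posPart_pos_iff] at h

/-- Flux construction via path decomposition: given a collection of directed walks
`γ_{x→y}` and `D : Ω → ℝ` summing to zero, there is an admissible flux `J` that
decomposes as a nonnegative combination of unit flows along the walks, with a
sparse transport plan bounded by the local mass changes. -/
theorem flux_construction_via_path_decomposition {Ω : Type*} [Fintype Ω]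
    [DecidableEq Ω] (G : SimpleGraph Ω) [DecidableRel G.Adj]
    (γ : ∀ x y : Ω, G.Walk x y)
    (F : Ω → Ω → Ω → Ω → ℝ)
    (hF : ∀ x y u v : Ω, F x y u v =
      (((γ x y).darts.filter (fun d => d.fst = u ∧ d.snd = v)).length : ℝ) -
      (((γ x y).darts.filter (fun d => d.fst = v ∧ d.snd = u)).length : ℝ))
    (D : Ω → ℝ) (hD : ∑ x, D x = 0) :
    ∃ (J : Ω → Ω → ℝ) (j : Ω → Ω → ℝ),
      (∀ u v, J u v = - J v u) ∧
      (∀ u v, ¬ G.Adj u v → J u v = 0) ∧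
      (∀ x, D x + ∑ y, J x y = 0) ∧
      (∀ u v, J u v = ∑ x, ∑ y, j x y * F x y u v) ∧
      (∀ x y, 0 ≤ j x y) ∧
      (∀ x y, 0 < j x y → D x < 0 ∧ 0 < D y) ∧
      ((Finset.univ.filter (fun p : Ω × Ω => j p.1 p.2 ≠ 0)).card ≤
        2 * Fintype.card Ω) ∧
      (∀ x y, j x y ≤ min |D x| |D y|) :=
  flux_construction_via_path_decomposition_general G γ F hF D hD
end

section
/- Let q ≥ 2 and n ≥ 1 be integers and ε₀ ∈ (0,1). Let Ω = [q]ⁿ and let μ_{β₀} be the mean-field Potts measure μ_{β₀}(σ) = exp((β₀/n)·Σ_{i,j∈[n]} 1[σᵢ = σⱼ]) / Z with Z the normalizing constant. Let Ω₀ = {(a, a, …, a) ∈ [q]ⁿ : a ∈ [q]} be the set of monochromatic configurations, and define the probability measure ν = (ε₀/2)·Unif(Ω) + (1 − ε₀/2)·Unif(Ω₀), i.e. ν(σ) = (ε₀/2)·q^{−n} + (1 − ε₀/2)·(1/q)·1[σ ∈ Ω₀]. If β₀ ≥ n·log q + log(2/ε₀), then KL(μ_{β₀} ‖ ν) < ε₀,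 where KL(μ ‖ ν) = Σ_{σ∈Ω} μ(σ)·log(μ(σ)/ν(σ)). -/
/-!
Every monochromatic configuration has the maximal energy `n²`, and there are `q` of them, so the
partition function is at least `q·e^{β₀ n}` and each monochromatic configuration has Gibbs mass at
most `1/q`, i.e. at most `(1 - ε₀/2)⁻¹` times its `ν`-mass. Any other configuration has energy at
most `n(n-1)`, hence Gibbs mass at most `e^{-β₀}/q ≤ (ε₀/2) q^{-n} ≤ ν(σ)`. So `μ ≤ (1 - ε₀/2)⁻¹ ν`
pointwise, which bounds the divergence by `-log (1 - ε₀/2) < ε₀`.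
-/

open Finset Real

theorem sum_mul_log_div_le_log_of_le_mul {α : Type*} [Fintype α] {μ ν : α → ℝ} {c : ℝ}
    (hμ : ∀ a, 0 ≤ μ a) (hμ_sum : ∑ a, μ a = 1) (hc : 0 < c) (hμν : ∀ a, μ a ≤ c * ν a) :
    ∑ a, μ a * log (μ a / ν a) ≤ log c := by
  calc ∑ a, μ a * log (μ a / ν a) ≤ ∑ a, μ a * log c := sum_le_sum fun a _ => ?_
    _ = log c := by rw [← sum_mul, hμ_sum, one_mul]
  rcases (hμ a).eq_or_lt with h | h
  · simp [← h]
  · have hν : 0 < ν a := pos_of_mul_pos_right (h.trans_le (hμν a)) hc.le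
    exact mul_le_mul_of_nonneg_left
      (log_le_log (div_pos h hν) ((div_le_iff₀ hν).2 (by linarith [hμν a]))) h.le

theorem neg_log_one_sub_half_lt {ε : ℝ} (h0 : 0 < ε) (h1 : ε < 1) : -log (1 - ε / 2) < ε := by
  have hpos : 0 < 1 - ε / 2 := by linarith
  have hinv : (1 - ε / 2)⁻¹ < 1 + ε := by
    rw [inv_lt_iff_one_lt_mul₀ hpos]
    nlinarith
  linarith [one_sub_inv_le_log_of_pos hpos]

theorem exp_neg_le_of_mul_log_add_log_le {q ε β : ℝ} (n : ℕ) (hq : 0 < q) (hε : 0 < ε)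
    (h : n * log q + log (2 / ε) ≤ β) : exp (-β) ≤ ε / 2 / q ^ n := by
  have hβ : q ^ n * (2 / ε) ≤ exp β :=
    calc q ^ n * (2 / ε) = exp (n * log q + log (2 / ε)) := by
          rw [exp_add, exp_nat_mul, exp_log hq, exp_log (by positivity)]
      _ ≤ exp β := exp_le_exp.2 h
  rw [exp_neg, show ε / 2 / q ^ n = (q ^ n * (2 / ε))⁻¹ by field_simp]
  exact inv_anti₀ (by positivity) hβ

namespace Potts

/-- Reducible, so that it inherits the `Decidable` instances of `∃ a, ∀ i, σ i = a`. -/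
abbrev IsMonochromatic {ι κ : Type*} (σ : ι → κ) : Prop := ∃ a, ∀ i, σ i = a

variable {ι κ : Type*} [Fintype ι] [DecidableEq κ]

noncomputable def energy (σ : ι → κ) : ℝ := ∑ i, ∑ j, if σ i = σ j then 1 else 0

noncomputable def weight (β : ℝ) (σ : ι → κ) : ℝ := exp (β / Fintype.card ι * energy σ)

theorem energy_const (a : κ) : energy (Function.const ι a) = (Fintype.card ι : ℝ) ^ 2 := by
  simp [energy, sq]

theorem energy_le_of_not_isMonochromatic {σ : ι → κ} (hσ : ¬IsMonochromatic σ) :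
    energy σ ≤ Fintype.card ι * (Fintype.card ι - 1) := by
  have hrow (i : ι) : (∑ j, if σ i = σ j then (1 : ℝ) else 0) ≤ Fintype.card ι - 1 := by
    have hlt : (univ.filter fun j => σ i = σ j).card < Fintype.card ι := by
      refine card_lt_card (filter_ssubset.2 ?_)
      by_contra! hall
      exact hσ ⟨σ i, fun j => (hall j (mem_univ j)).symm⟩
    have : ((univ.filter fun j => σ i = σ j).card : ℝ) + 1 ≤ Fintype.card ι := by
      exact_mod_cast hlt
    rw [sum_boole]
    linarith
  calc energy σ ≤ ∑ _i : ι, ((Fintype.card ι : ℝ) - 1) := sum_le_sum fun i _ => hrow i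
    _ = Fintype.card ι * (Fintype.card ι - 1) := by simp; ring

theorem weight_const [Nonempty ι] (β : ℝ) (a : κ) :
    weight β (Function.const ι a) = exp (β * Fintype.card ι) := by
  have : (Fintype.card ι : ℝ) ≠ 0 := by positivity
  rw [weight, energy_const]
  field_simp

theorem weight_le_of_not_isMonochromatic [Nonempty ι] {β : ℝ} (hβ : 0 ≤ β) {σ : ι → κ}
    (hσ : ¬IsMonochromatic σ) : weight β σ ≤ exp (-β) * exp (β * Fintype.card ι) := by
  rw [weight, ← exp_add]
  refine exp_le_exp.2 ?_
  have : (Fintype.card ι : ℝ) ≠ 0 := by positivity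
  calc β / Fintype.card ι * energy σ
      ≤ β / Fintype.card ι * (Fintype.card ι * (Fintype.card ι - 1)) :=
        mul_le_mul_of_nonneg_left (energy_le_of_not_isMonochromatic hσ) (by positivity)
    _ = -β + β * Fintype.card ι := by field_simp; ring

variable [DecidableEq ι] [Fintype κ]

variable (ι κ) in
noncomputable def partitionFunction (β : ℝ) : ℝ := ∑ σ : ι → κ, weight β σ

noncomputable def gibbs (β : ℝ) (σ : ι → κ) : ℝ := weight β σ / partitionFunction ι κ β

theorem card_mul_exp_le_partitionFunction [Nonempty ι] (β : ℝ) :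
    Fintype.card κ * exp (β * Fintype.card ι) ≤ partitionFunction ι κ β := by
  calc (Fintype.card κ : ℝ) * exp (β * Fintype.card ι)
      = ∑ a : κ, weight β (Function.const ι a) := by simp [weight_const]
    _ = ∑ σ ∈ univ.map ⟨Function.const ι, Function.const_injective⟩, weight β σ := by
        rw [sum_map]; rfl
    _ ≤ partitionFunction ι κ β :=
        sum_le_sum_of_subset_of_nonneg (subset_univ _) fun σ _ _ => (exp_pos _).le

theorem gibbs_nonneg (β : ℝ) (σ : ι → κ) : 0 ≤ gibbs β σ :=
  div_nonneg (exp_pos _).le (sum_nonneg fun _ _ => (exp_pos _).le)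

theorem sum_gibbs [Nonempty κ] (β : ℝ) : ∑ σ : ι → κ, gibbs β σ = 1 := by
  simp only [gibbs, ← sum_div]
  exact div_self (sum_pos (fun _ _ => exp_pos _) univ_nonempty).ne'

theorem gibbs_le_inv_card_of_isMonochromatic [Nonempty ι] (β : ℝ) {σ : ι → κ}
    (hσ : IsMonochromatic σ) : gibbs β σ ≤ (Fintype.card κ : ℝ)⁻¹ := by
  obtain ⟨a, ha⟩ := hσ
  have : Nonempty κ := ⟨a⟩
  obtain rfl : σ = Function.const ι a := funext ha
  calc gibbs β (Function.const ι a)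
      ≤ exp (β * Fintype.card ι) / (Fintype.card κ * exp (β * Fintype.card ι)) := by
        rw [gibbs, weight_const]
        exact div_le_div_of_nonneg_left (exp_pos _).le (by positivity)
          (card_mul_exp_le_partitionFunction β)
    _ = (Fintype.card κ : ℝ)⁻¹ := by field_simp

theorem gibbs_le_of_not_isMonochromatic [Nonempty ι] {β : ℝ} (hβ : 0 ≤ β) {σ : ι → κ}
    (hσ : ¬IsMonochromatic σ) : gibbs β σ ≤ exp (-β) / Fintype.card κ := by
  have : Nonempty κ := ⟨σ (Classical.arbitrary ι)⟩
  calc gibbs β σ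
      ≤ exp (-β) * exp (β * Fintype.card ι) / (Fintype.card κ * exp (β * Fintype.card ι)) :=
        div_le_div₀ (by positivity) (weight_le_of_not_isMonochromatic hβ hσ) (by positivity)
          (card_mul_exp_le_partitionFunction β)
    _ = exp (-β) / Fintype.card κ := mul_div_mul_right _ _ (exp_pos _).ne'

theorem one_sub_half_mul_gibbs_le_mixture [Nonempty ι] {β ε : ℝ} (hβ : 0 ≤ β) (hε₀ : 0 ≤ ε)
    (hε₂ : ε ≤ 2) (hβε : exp (-β) ≤ ε / 2 / (Fintype.card κ : ℝ) ^ Fintype.card ι)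
    (σ : ι → κ) [Decidable (IsMonochromatic σ)] :
    (1 - ε / 2) * gibbs β σ ≤ ε / 2 / (Fintype.card κ : ℝ) ^ Fintype.card ι +
      (1 - ε / 2) * (1 / Fintype.card κ) * (if IsMonochromatic σ then 1 else 0) := by
  have : Nonempty κ := ⟨σ (Classical.arbitrary ι)⟩
  have hq : (1 : ℝ) ≤ Fintype.card κ := by exact_mod_cast Fintype.card_pos
  by_cases hσ : IsMonochromatic σ
  · rw [if_pos hσ, mul_one, one_div]
    have := mul_le_mul_of_nonneg_left (gibbs_le_inv_card_of_isMonochromatic β hσ)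
      (by linarith : 0 ≤ 1 - ε / 2)
    have : 0 ≤ ε / 2 / (Fintype.card κ : ℝ) ^ Fintype.card ι := by positivity
    linarith
  · rw [if_neg hσ, mul_zero, add_zero]
    calc (1 - ε / 2) * gibbs β σ ≤ gibbs β σ := by nlinarith [gibbs_nonneg β σ]
      _ ≤ exp (-β) / Fintype.card κ := gibbs_le_of_not_isMonochromatic hβ hσ
      _ ≤ exp (-β) := div_le_self (exp_pos _).le hq
      _ ≤ _ := hβε

end Potts

/-- At an extremely low temperature `β₀ ≥ n·log q + log(2/ε₀)`, the mean-field
Potts measure is within KL divergence `ε₀` of the mixture of the uniform measure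
on all configurations (weight `ε₀/2`) and the uniform measure on monochromatic
configurations. -/
theorem potts_low_temperature_initialization (q n : ℕ) (hq : 2 ≤ q) (hn : 1 ≤ n)
    (ε₀ : ℝ) (hε : ε₀ ∈ Set.Ioo (0 : ℝ) 1)
    (β₀ : ℝ)
    (μ : (Fin n → Fin q) → ℝ)
    (hμ : ∀ σ, μ σ =
      Real.exp ((β₀ / n) * ∑ i, ∑ j, if σ i = σ j then (1 : ℝ) else 0) /
      ∑ τ : Fin n → Fin q,
        Real.exp ((β₀ / n) * ∑ i, ∑ j, if τ i = τ j then (1 : ℝ) else 0))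
    (ν : (Fin n → Fin q) → ℝ)
    (hν : ∀ σ, ν σ = (ε₀ / 2) / (q : ℝ) ^ n +
      (1 - ε₀ / 2) * (1 / q) * (if ∃ a, ∀ i, σ i = a then (1 : ℝ) else 0))
    (hβ₀ : (n : ℝ) * Real.log q + Real.log (2 / ε₀) ≤ β₀) :
    ∑ σ : Fin n → Fin q, μ σ * Real.log (μ σ / ν σ) < ε₀ := by
  obtain ⟨hε0, hε1⟩ := hε
  have : Nonempty (Fin n) := ⟨⟨0, hn⟩⟩
  have : Nonempty (Fin q) := ⟨⟨0, by omega⟩⟩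
  have hq1 : (1 : ℝ) ≤ q := by exact_mod_cast (by omega : 1 ≤ q)
  have hμ_gibbs : μ = Potts.gibbs β₀ := funext fun σ => by
    simp only [hμ, Potts.gibbs, Potts.partitionFunction, Potts.weight, Potts.energy,
      Fintype.card_fin]
  have hβ_nonneg : 0 ≤ β₀ := by
    have := mul_nonneg (Nat.cast_nonneg n) (log_nonneg hq1)
    have := log_pos (show (1 : ℝ) < 2 / ε₀ by rw [lt_div_iff₀ hε0]; linarith)
    linarith
  have hβε := exp_neg_le_of_mul_log_add_log_le n (by linarith) hε0 hβ₀
  have hdom (σ : Fin n → Fin q) : μ σ ≤ (1 - ε₀ / 2)⁻¹ * ν σ := by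
    have := Potts.one_sub_half_mul_gibbs_le_mixture hβ_nonneg hε0.le (by linarith)
      (by simpa only [Fintype.card_fin] using hβε) σ
    simp only [Fintype.card_fin] at this
    rw [le_inv_mul_iff₀ (by linarith), hν σ, hμ_gibbs]
    exact this
  calc ∑ σ, μ σ * log (μ σ / ν σ) ≤ log (1 - ε₀ / 2)⁻¹ :=
        sum_mul_log_div_le_log_of_le_mul (hμ_gibbs ▸ Potts.gibbs_nonneg β₀)
          (hμ_gibbs ▸ Potts.sum_gibbs β₀) (inv_pos.2 (by linarith)) hdom
    _ < ε₀ := by rw [log_inv]; exact neg_log_one_sub_half_lt hε0 hε1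
end
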